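/- Let n ∈ ℕ, λ ∈ ℝ, and c ∈ ℂ. Let u : (0,1) → ℝ be twice continuously differentiable and satisfy ρ²·u''(ρ) + ρ·u'(ρ) + (4λ·ρ⁴ − n²)·u(ρ) = 0 for all ρ ∈ (0,1). Define ψ : B(0,1) \ {0} → ℝ by ψ(y) = u(‖y‖)·Re( c·(y/‖y‖)ⁿ ). Then −Δψ(y) = 4λ·‖y‖²·ψ(y) for all y ∈ B(0,1) \ {0}. -/

import Mathlib

open Complex

/-- The pointwise Euclidean Laplacian on `ℝ² ≅ ℂ` of a real-valued function,
as the sum of the second directional derivatives in the directions `1` and `I`. -/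
noncomputable def lapR (f : ℂ → ℝ) (x : ℂ) : ℝ :=
  fderiv ℝ (fun y => fderiv ℝ f y 1) x 1 +
    fderiv ℝ (fun y => fderiv ℝ f y Complex.I) x Complex.I

open Filter Topology
open scoped RealInnerProductSpace
open Laplacian

/-!
Write `ψ = u(‖y‖) · Θ(y)` with the angular factor `Θ(y) = Re(c (y/‖y‖)ⁿ) = ‖y‖⁻ⁿ Re(c yⁿ)`.
For a radial factor the product rule reads
`Δ(f(‖y‖) g) = f Δg + 2 f'(ρ)/ρ · Dg(y) y + (f'' + f'/ρ) g`, with `ρ = ‖y‖`.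
By Euler's relation `Dg(y) y = k g(y)` for `g` homogeneous of degree `k`. Since `Θ` has degree `0`,
`Δψ = u ΔΘ + (u'' + u'/ρ) Θ`; and since `Re(c yⁿ)` is harmonic of degree `n`, the same rule
applied to `‖y‖⁻ⁿ · Re(c yⁿ)` gives `ΔΘ = -(n²/ρ²) Θ`.
So `Δψ = (u'' + u'/ρ - n² u/ρ²) Θ = -4λρ²ψ` by the ODE.
-/

section Product
variable {E : Type*} [NormedAddCommGroup E] [NormedSpace ℝ E]

lemma ContDiffAt.differentiableAt_fderiv_apply {f : E → ℝ} {x : E} (hf : ContDiffAt ℝ 2 f x)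
    (v : E) : DifferentiableAt ℝ (fun y => fderiv ℝ f y v) x :=
  ((hf.fderiv_right (m := 1) (by norm_num)).differentiableAt (by norm_num)).clm_apply
    (differentiableAt_const v)

lemma fderiv_fderiv_mul_apply {f g : E → ℝ} {x : E} (hf : ContDiffAt ℝ 2 f x)
    (hg : ContDiffAt ℝ 2 g x) (v : E) :
    fderiv ℝ (fun y => fderiv ℝ (fun z => f z * g z) y v) x v =
      f x * fderiv ℝ (fun y => fderiv ℝ g y v) x v + 2 * (fderiv ℝ f x v * fderiv ℝ g x v) +
        g x * fderiv ℝ (fun y => fderiv ℝ f y v) x v := by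
  have hprod : (fun y => fderiv ℝ (fun z => f z * g z) y v) =ᶠ[𝓝 x]
      fun y => f y * fderiv ℝ g y v + g y * fderiv ℝ f y v := by
    filter_upwards [hf.eventually (by simp), hg.eventually (by simp)] with y hfy hgy
    rw [((hfy.differentiableAt (by norm_num)).hasFDerivAt.fun_mul
      (hgy.differentiableAt (by norm_num)).hasFDerivAt).fderiv]
    simp only [add_apply, smul_apply, smul_eq_mul]
  have hfx := (hf.differentiableAt (by norm_num)).hasFDerivAt
  have hgx := (hg.differentiableAt (by norm_num)).hasFDerivAt
  rw [hprod.fderiv_eq, ((hfx.fun_mul (hg.differentiableAt_fderiv_apply v).hasFDerivAt).fun_add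
    (hgx.fun_mul (hf.differentiableAt_fderiv_apply v).hasFDerivAt)).fderiv]
  simp only [add_apply, smul_apply, smul_eq_mul]
  ring

lemma fderiv_apply_self_of_homogeneous {f : E → ℝ} {x : E} {k : ℕ} (hf : DifferentiableAt ℝ f x)
    (hom : ∀ t : ℝ, 0 < t → f (t • x) = t ^ k * f x) : fderiv ℝ f x x = k * f x := by
  have hchain : HasDerivAt (fun t : ℝ => f (t • x)) (fderiv ℝ f x x) 1 := by
    have := hf.hasFDerivAt.comp_hasDerivAt_of_eq (1 : ℝ) ((hasDerivAt_id (1 : ℝ)).smul_const x)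
      (one_smul ℝ x).symm
    rwa [one_smul] at this
  have hpow : HasDerivAt (fun t : ℝ => f (t • x)) (k * f x) 1 := by
    have := (hasDerivAt_pow k (1 : ℝ)).mul_const (f x)
    simp only [one_pow, mul_one] at this
    refine this.congr_of_eventuallyEq ?_
    filter_upwards [lt_mem_nhds one_pos] with t ht using hom t ht
  exact hchain.unique hpow

end Product

section Radial
variable {F : Type*} [NormedAddCommGroup F] [InnerProductSpace ℝ F]

lemma hasFDerivAt_norm {x : F} (hx : x ≠ 0) :
    HasFDerivAt (fun y : F => ‖y‖) (‖x‖⁻¹ • innerSL ℝ x) x := by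
  have hsq := (hasStrictFDerivAt_norm_sq x).hasFDerivAt.sqrt (by positivity)
  simp only [Real.sqrt_sq (norm_nonneg _)] at hsq
  convert hsq using 1
  ext w
  simp only [smul_apply, smul_eq_mul, nsmul_eq_mul, Nat.cast_ofNat]
  field_simp

lemma HasDerivAt.hasFDerivAt_comp_norm {f : ℝ → ℝ} {f' : ℝ} {x : F} (hx : x ≠ 0)
    (hf : HasDerivAt f f' ‖x‖) :
    HasFDerivAt (fun y => f ‖y‖) ((f' / ‖x‖) • innerSL ℝ x) x := by
  have := hf.comp_hasFDerivAt x (hasFDerivAt_norm hx)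
  rwa [smul_smul, ← div_eq_mul_inv] at this

lemma fderiv_comp_norm_apply {f : ℝ → ℝ} {x : F} (hx : x ≠ 0) (hf : DifferentiableAt ℝ f ‖x‖)
    (w : F) : fderiv ℝ (fun z => f ‖z‖) x w = deriv f ‖x‖ / ‖x‖ * ⟪x, w⟫ := by
  rw [(hf.hasDerivAt.hasFDerivAt_comp_norm hx).fderiv]
  simp only [smul_apply, smul_eq_mul, innerSL_apply_apply]

lemma fderiv_fderiv_comp_norm_apply {f : ℝ → ℝ} {x : F} (hx : x ≠ 0)
    (hf : ContDiffAt ℝ 2 f ‖x‖) (w : F) :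
    fderiv ℝ (fun y => fderiv ℝ (fun z => f ‖z‖) y w) x w =
      (deriv (deriv f) ‖x‖ - deriv f ‖x‖ / ‖x‖) * (⟪x, w⟫ / ‖x‖) ^ 2 +
        deriv f ‖x‖ / ‖x‖ * ‖w‖ ^ 2 := by
  have hgrad : (fun y => fderiv ℝ (fun z => f ‖z‖) y w) =ᶠ[𝓝 x]
      fun y => deriv f ‖y‖ / ‖y‖ * innerSL ℝ w y := by
    have hfy : ∀ᶠ y in 𝓝 x, ContDiffAt ℝ 2 f ‖y‖ :=
      (continuous_norm.continuousAt).eventually (hf.eventually (by simp))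
    filter_upwards [hfy, isOpen_ne.mem_nhds hx] with y hy hy0
    rw [fderiv_comp_norm_apply hy0 (hy.differentiableAt (by norm_num)), innerSL_apply_apply,
      real_inner_comm]
  have hρ : HasDerivAt (fun ρ => deriv f ρ / ρ)
      ((deriv (deriv f) ‖x‖ * ‖x‖ - deriv f ‖x‖ * 1) / ‖x‖ ^ 2) ‖x‖ :=
    (hf.differentiableAt_fderiv_apply 1).hasDerivAt.div (hasDerivAt_id _) (norm_ne_zero_iff.2 hx)
  rw [hgrad.fderiv_eq, ((hρ.hasFDerivAt_comp_norm hx).fun_mul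
    (innerSL ℝ w).hasFDerivAt).fderiv]
  simp only [add_apply, smul_apply, smul_eq_mul, innerSL_apply_apply, real_inner_self_eq_norm_sq]
  rw [real_inner_comm w x]
  field_simp
  ring

end Radial

lemma Complex.real_inner_one_right (x : ℂ) : ⟪x, 1⟫ = x.re := by
  simp [Complex.inner]

lemma Complex.real_inner_I_right (x : ℂ) : ⟪x, I⟫ = x.im := by
  simp [Complex.inner]

lemma lapR_eq_laplacian {f : ℂ → ℝ} {x : ℂ} (hf : ContDiffAt ℝ 2 f x) : lapR f x = Δ f x := by
  have hdiff : DifferentiableAt ℝ (fderiv ℝ f) x :=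
    (hf.fderiv_right (m := 1) (by norm_num)).differentiableAt (by norm_num)
  have hdir : ∀ v, fderiv ℝ (fun y => fderiv ℝ f y v) x v = fderiv ℝ (fderiv ℝ f) x v v := by
    intro v
    rw [fderiv_clm_apply hdiff (differentiableAt_const v)]
    simp
  rw [InnerProductSpace.laplacian_eq_iteratedFDeriv_complexPlane, lapR, hdir, hdir]
  simp only [iteratedFDeriv_two_apply]
  rfl

lemma AnalyticAt.lapR_re_eq_zero {f : ℂ → ℂ} {x : ℂ} (hf : AnalyticAt ℂ f x) :
    lapR (fun z => (f z).re) x = 0 := by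
  have hharm := hf.harmonicAt_re
  rw [lapR_eq_laplacian hharm.1]
  exact hharm.2.self_of_nhds

lemma lapR_mul {f g : ℂ → ℝ} {x : ℂ} (hf : ContDiffAt ℝ 2 f x) (hg : ContDiffAt ℝ 2 g x) :
    lapR (fun z => f z * g z) x = f x * lapR g x +
      2 * (fderiv ℝ f x 1 * fderiv ℝ g x 1 + fderiv ℝ f x I * fderiv ℝ g x I) + g x * lapR f x := by
  simp only [lapR, fderiv_fderiv_mul_apply hf hg]
  ring

lemma lapR_comp_norm {f : ℝ → ℝ} {x : ℂ} (hx : x ≠ 0) (hf : ContDiffAt ℝ 2 f ‖x‖) :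
    lapR (fun z => f ‖z‖) x = deriv (deriv f) ‖x‖ + deriv f ‖x‖ / ‖x‖ := by
  have hnorm : x.re ^ 2 + x.im ^ 2 = ‖x‖ ^ 2 := by
    rw [Complex.sq_norm, Complex.normSq_apply]; ring
  have hx' : ‖x‖ ≠ 0 := norm_ne_zero_iff.2 hx
  simp only [lapR, fderiv_fderiv_comp_norm_apply hx hf, Complex.real_inner_one_right,
    Complex.real_inner_I_right, norm_one, Complex.norm_I]
  field_simp
  linear_combination (deriv (deriv f) ‖x‖ * ‖x‖ - deriv f ‖x‖) * hnorm

lemma lapR_comp_norm_mul {f : ℝ → ℝ} {g : ℂ → ℝ} {x : ℂ} (hx : x ≠ 0) (hf : ContDiffAt ℝ 2 f ‖x‖)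
    (hg : ContDiffAt ℝ 2 g x) :
    lapR (fun z => f ‖z‖ * g z) x = f ‖x‖ * lapR g x + 2 * (deriv f ‖x‖ / ‖x‖) * fderiv ℝ g x x +
      (deriv (deriv f) ‖x‖ + deriv f ‖x‖ / ‖x‖) * g x := by
  have hfx : DifferentiableAt ℝ f ‖x‖ := hf.differentiableAt (by norm_num)
  have hgx : fderiv ℝ g x x = x.re * fderiv ℝ g x 1 + x.im * fderiv ℝ g x I := by
    have hbasis : x = x.re • (1 : ℂ) + x.im • I := by simp [Complex.real_smul]
    conv_lhs => arg 2; rw [hbasis]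
    rw [map_add, map_smul, map_smul, smul_eq_mul, smul_eq_mul]
  rw [lapR_mul (f := fun z => f ‖z‖) (hf.comp x (contDiffAt_norm ℝ hx)) hg, lapR_comp_norm hx hf,
    fderiv_comp_norm_apply hx hfx, fderiv_comp_norm_apply hx hfx, hgx,
    Complex.real_inner_one_right, Complex.real_inner_I_right]
  ring

lemma contDiff_re_const_mul_pow (c : ℂ) (n : ℕ) {k : WithTop ℕ∞} :
    ContDiff ℝ k (fun z : ℂ => (c * z ^ n).re) := by
  have hpoly : ContDiff ℂ k fun z : ℂ => c * z ^ n := contDiff_const.mul (contDiff_id.pow n)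
  exact reCLM.contDiff.comp (hpoly.restrict_scalars ℝ)

lemma fderiv_re_const_mul_pow_apply_self (c : ℂ) (n : ℕ) (x : ℂ) :
    fderiv ℝ (fun z : ℂ => (c * z ^ n).re) x x = n * (c * x ^ n).re :=
  fderiv_apply_self_of_homogeneous ((contDiff_re_const_mul_pow c n (k := 1)).differentiable
    one_ne_zero x) fun t _ => by
    rw [Complex.real_smul, mul_pow, ← ofReal_pow, mul_left_comm, re_ofReal_mul]

lemma contDiffAt_zpow {k : WithTop ℕ∞} {m : ℤ} {ρ : ℝ} (hρ : ρ ≠ 0) :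
    ContDiffAt ℝ k (fun r : ℝ => r ^ m) ρ := by
  rcases Int.eq_nat_or_neg m with ⟨j, rfl | rfl⟩
  · simp only [zpow_natCast]
    exact contDiffAt_id.pow j
  · simp only [zpow_neg, zpow_natCast]
    exact (contDiffAt_id.pow j).inv (pow_ne_zero j hρ)

noncomputable def angular (c : ℂ) (n : ℕ) (z : ℂ) : ℝ := (c * (z / ‖z‖) ^ n).re

lemma angular_eq_zpow_mul (c : ℂ) (n : ℕ) (z : ℂ) :
    angular c n z = ‖z‖ ^ (-(n : ℤ)) * (c * z ^ n).re := by
  rw [angular, div_pow, ← mul_div_assoc, ← ofReal_pow, div_ofReal_re, zpow_neg, zpow_natCast,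
    inv_mul_eq_div]

lemma angular_smul (c : ℂ) (n : ℕ) {t : ℝ} (ht : 0 < t) (z : ℂ) :
    angular c n (t • z) = angular c n z := by
  have hdir : (t • z) / (‖t • z‖ : ℂ) = z / ‖z‖ := by
    rw [norm_smul, Real.norm_of_nonneg ht.le, Complex.real_smul, ofReal_mul,
      mul_div_mul_left _ _ (ofReal_ne_zero.2 ht.ne')]
  rw [angular, angular, hdir]

lemma contDiffAt_angular (c : ℂ) (n : ℕ) {x : ℂ} (hx : x ≠ 0) :
    ContDiffAt ℝ 2 (angular c n) x := by
  rw [funext (angular_eq_zpow_mul c n)]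
  exact ((contDiffAt_zpow (norm_ne_zero_iff.2 hx)).comp x (contDiffAt_norm ℝ hx)).mul
    (contDiff_re_const_mul_pow c n).contDiffAt

lemma fderiv_angular_apply_self (c : ℂ) (n : ℕ) {x : ℂ} (hx : x ≠ 0) :
    fderiv ℝ (angular c n) x x = 0 := by
  simpa using fderiv_apply_self_of_homogeneous (k := 0)
    ((contDiffAt_angular c n hx).differentiableAt (by norm_num))
    fun t ht => by rw [angular_smul c n ht, pow_zero, one_mul]

lemma lapR_angular (c : ℂ) (n : ℕ) {x : ℂ} (hx : x ≠ 0) :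
    lapR (angular c n) x = -((n : ℝ) ^ 2 / ‖x‖ ^ 2) * angular c n x := by
  have hx' : ‖x‖ ≠ 0 := norm_ne_zero_iff.2 hx
  rw [funext (angular_eq_zpow_mul c n), lapR_comp_norm_mul hx (contDiffAt_zpow hx')
    (contDiff_re_const_mul_pow c n).contDiffAt,
    (by fun_prop : AnalyticAt ℂ (fun z => c * z ^ n) x).lapR_re_eq_zero,
    fderiv_re_const_mul_pow_apply_self]
  simp only [deriv_zpow', deriv_const_mul_field', zpow_sub_one₀ hx']
  push_cast
  field_simp
  ring

/-- Separation of variables: if `u` is `C²` on `(0,1)` and satisfies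
`ρ²u'' + ρu' + (4λρ⁴ − n²)u = 0`, then `ψ(y) = u(‖y‖)·Re(c·(y/‖y‖)ⁿ)`
satisfies `−Δψ = 4λ‖y‖²ψ` on the punctured unit disk. -/
theorem separation_of_variables
    (n : ℕ) (lam : ℝ) (c : ℂ) (u : ℝ → ℝ)
    (hu : ContDiffOn ℝ 2 u (Set.Ioo 0 1))
    (hode : ∀ ρ ∈ Set.Ioo (0 : ℝ) 1,
      ρ ^ 2 * deriv (deriv u) ρ + ρ * deriv u ρ + (4 * lam * ρ ^ 4 - (n : ℝ) ^ 2) * u ρ = 0)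
    (ψ : ℂ → ℝ)
    (hψ : ∀ y, ψ y = u ‖y‖ * (c * (y / (‖y‖ : ℂ)) ^ n).re) :
    ∀ y ∈ Metric.ball (0 : ℂ) 1 \ {0},
      -lapR ψ y = 4 * lam * ‖y‖ ^ 2 * ψ y := by
  rintro y ⟨hy1, hy0 : y ≠ 0⟩
  have hρ : ‖y‖ ∈ Set.Ioo (0 : ℝ) 1 := ⟨norm_pos_iff.2 hy0, mem_ball_zero_iff.1 hy1⟩
  have hψ' : ψ = fun z => u ‖z‖ * angular c n z := funext hψ
  rw [hψ', lapR_comp_norm_mul hy0 (hu.contDiffAt (isOpen_Ioo.mem_nhds hρ))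
    (contDiffAt_angular c n hy0), lapR_angular c n hy0, fderiv_angular_apply_self c n hy0]
  have hρ0 : ‖y‖ ≠ 0 := hρ.1.ne'
  field_simp
  linear_combination (-angular c n y) * hode ‖y‖ hρ
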